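/- arXiv:1704.02367 — 2 statements merged into one kernel-verified Lean document; each statement's English description precedes it below -/
import Mathlib

section
/- For any integer k > 0, any function f: ℕ → ℕ, and any real γ > 0, there exists T = T(k, f, γ) such that for every equipartition C of a Σ-colored graph G with |C| = k, there exists an (f, γ)-robust equipartition C' refining C with |C'| ≤ T. Moreover T can be taken so that the robustification process terminates after at most 1/γ refinement steps. -/
open Finset

noncomputable def dens {V C : Type*} [DecidableEq V] [DecidableEq C]
    (c : V → V → C) (σ : C) (A B : Finset V) : ℝ :=
  (((A ×ˢ B).filter (fun p => c p.1 p.2 = σ)).card : ℝ) / ((A.card : ℝ) * (B.card : ℝ))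

noncomputable def indPair {V C : Type*} [DecidableEq V] [Fintype C] [DecidableEq C]
    (c : V → V → C) (A B : Finset V) : ℝ :=
  ∑ σ : C, (dens c σ A B) ^ 2

noncomputable def indPart {V C : Type*} [Fintype V] [DecidableEq V] [Fintype C] [DecidableEq C]
    (c : V → V → C) {k : ℕ} (P : Fin k → Finset V) : ℝ :=
  ∑ p ∈ univ.filter (fun p : Fin k × Fin k => p.1 < p.2),
    (((P p.1).card : ℝ) * ((P p.2).card : ℝ) / ((Fintype.card V).choose 2 : ℝ))
      * indPair c (P p.1) (P p.2)

def IsPartition {V : Type*} [Fintype V] [DecidableEq V] {k : ℕ} (P : Fin k → Finset V) : Prop :=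
  (∀ i j, i ≠ j → Disjoint (P i) (P j)) ∧ (∀ v : V, ∃ i, v ∈ P i)

/-- An equipartition: all parts have sizes differing by at most 1. -/
def IsEquipartition' {V : Type*} {k : ℕ} (P : Fin k → Finset V) : Prop :=
  ∀ i j, (P i).card ≤ (P j).card + 1

def Refines {V : Type*} {k k' : ℕ} (P' : Fin k' → Finset V) (P : Fin k → Finset V) : Prop :=
  ∀ j, ∃ i, P' j ⊆ P i

/-- An equipartition `P` of size `k` is `(f, γ)`-robust if no refining equipartition of
size at most `f(k)` has index exceeding `ind(P) + γ`. -/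
def IsRobust {V C : Type*} [Fintype V] [DecidableEq V] [Fintype C] [DecidableEq C]
    (c : V → V → C) (f : ℕ → ℕ) (γ : ℝ) {k : ℕ} (P : Fin k → Finset V) : Prop :=
  ∀ (k' : ℕ) (P' : Fin k' → Finset V),
    IsPartition P' → IsEquipartition' P' → Refines P' P → k' ≤ f k →
    indPart c P' ≤ indPart c P + γ

/-!
The index of a partition into pairwise disjoint parts lies in `[0, 1]`. Starting from `P`, while
the current equipartition `Q` is not `(f, γ)`-robust, pass to a refining equipartition with at most
`f |Q|` parts and index larger by more than `γ`. For any integer `m > 1 / γ` this happens fewer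
than `m` times, and the number of parts stays below the `m`-th iterate at `k` of a monotone
majorant of `f` and `id`.
-/

section Index

variable {V C : Type*} [DecidableEq V] [DecidableEq C] (c : V → V → C)

lemma dens_nonneg (σ : C) (A B : Finset V) : 0 ≤ _root_.dens c σ A B := by
  unfold _root_.dens
  positivity

lemma sum_dens_le_one [Fintype C] (A B : Finset V) : ∑ σ : C, _root_.dens c σ A B ≤ 1 := by
  have hcount : ∑ σ : C, (((A ×ˢ B).filter (fun p => c p.1 p.2 = σ)).card : ℝ)
      = (A.card : ℝ) * B.card := by
    rw [← Nat.cast_sum, ← card_eq_sum_card_fiberwise (fun p _ => mem_univ (c p.1 p.2)),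
      card_product, Nat.cast_mul]
  simp only [_root_.dens, ← sum_div, hcount]
  exact div_le_one_of_le₀ le_rfl (by positivity)

lemma dens_le_one [Fintype C] (σ : C) (A B : Finset V) : _root_.dens c σ A B ≤ 1 :=
  (single_le_sum (fun τ _ => dens_nonneg c τ A B) (mem_univ σ)).trans (sum_dens_le_one c A B)

lemma indPair_nonneg [Fintype C] (A B : Finset V) : 0 ≤ indPair c A B :=
  sum_nonneg fun _ _ => sq_nonneg _

lemma indPair_le_one [Fintype C] (A B : Finset V) : indPair c A B ≤ 1 :=
  calc indPair c A B ≤ ∑ σ : C, _root_.dens c σ A B :=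
        sum_le_sum fun σ _ =>
          pow_le_of_le_one (dens_nonneg c σ A B) (dens_le_one c σ A B) two_ne_zero
    _ ≤ 1 := sum_dens_le_one c A B

end Index

lemma sq_sum_eq_two_mul_sum_lt_add_sum_sq {ι R : Type*} [Fintype ι] [LinearOrder ι]
    [CommSemiring R] (a : ι → R) :
    (∑ i, a i) ^ 2 =
      2 * ∑ p ∈ univ.filter (fun p : ι × ι => p.1 < p.2), a p.1 * a p.2 + ∑ i, a i ^ 2 := by
  have hswap : ∑ p ∈ univ.filter (fun p : ι × ι => p.2 < p.1), a p.1 * a p.2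
      = ∑ p ∈ univ.filter (fun p : ι × ι => p.1 < p.2), a p.1 * a p.2 :=
    sum_equiv (Equiv.prodComm ι ι) (by simp) fun _ _ => by simp [mul_comm]
  have hdiag : ∑ p ∈ univ.filter (fun p : ι × ι => p.1 = p.2), a p.1 * a p.2 = ∑ i, a i ^ 2 := by
    simp [sum_filter, Fintype.sum_prod_type, sq]
  calc (∑ i, a i) ^ 2 = ∑ p : ι × ι, a p.1 * a p.2 := by
        rw [sq, sum_mul_sum, Fintype.sum_prod_type]
    _ = ∑ p ∈ univ.filter (fun p : ι × ι => p.1 < p.2), a p.1 * a p.2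
        + ∑ p ∈ univ.filter (fun p : ι × ι => p.2 < p.1), a p.1 * a p.2
        + ∑ p ∈ univ.filter (fun p : ι × ι => p.1 = p.2), a p.1 * a p.2 := by
        simp only [sum_filter, ← sum_add_distrib]
        refine sum_congr rfl fun p _ => ?_
        rcases lt_trichotomy p.1 p.2 with h | h | h
        · simp [h, h.not_gt, h.ne]
        · simp [h]
        · simp [h, h.not_gt, h.ne']
    _ = _ := by rw [hswap, hdiag, two_mul]

lemma sum_lt_mul_le_choose_two {ι : Type*} [Fintype ι] [LinearOrder ι] (a : ι → ℕ) :
    ∑ p ∈ univ.filter (fun p : ι × ι => p.1 < p.2), a p.1 * a p.2 ≤ (∑ i, a i).choose 2 := by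
  have hsq := sq_sum_eq_two_mul_sum_lt_add_sum_sq a
  have hle : ∑ i, a i ≤ ∑ i, a i ^ 2 := sum_le_sum fun i _ => Nat.le_self_pow two_ne_zero _
  rw [Nat.choose_two_right, Nat.le_div_iff_mul_le two_pos, Nat.mul_sub_one, ← sq]
  omega

section Partition

variable {V : Type*} [Fintype V] [DecidableEq V]

lemma sum_card_le_card_of_pairwise_disjoint {k : ℕ} {P : Fin k → Finset V}
    (hP : ∀ i j, i ≠ j → Disjoint (P i) (P j)) : ∑ i, (P i).card ≤ Fintype.card V := by
  rw [← card_biUnion fun i _ j _ hij => hP i j hij]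
  exact card_le_univ _

variable {C : Type*} [Fintype C] [DecidableEq C] (c : V → V → C)

lemma indPart_nonneg {k : ℕ} (P : Fin k → Finset V) : 0 ≤ indPart c P :=
  sum_nonneg fun p _ => mul_nonneg (by positivity) (indPair_nonneg c _ _)

lemma indPart_le_one {k : ℕ} {P : Fin k → Finset V}
    (hP : ∀ i j, i ≠ j → Disjoint (P i) (P j)) : indPart c P ≤ 1 := by
  set n := Fintype.card V
  have hweights : ∑ p ∈ univ.filter (fun p : Fin k × Fin k => p.1 < p.2),
      (P p.1).card * (P p.2).card ≤ n.choose 2 :=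
    (sum_lt_mul_le_choose_two _).trans
      (Nat.choose_le_choose 2 (sum_card_le_card_of_pairwise_disjoint hP))
  calc indPart c P ≤ ∑ p ∈ univ.filter (fun p : Fin k × Fin k => p.1 < p.2),
        ((P p.1).card : ℝ) * (P p.2).card / (n.choose 2 : ℝ) :=
        sum_le_sum fun p _ => mul_le_of_le_one_right (by positivity) (indPair_le_one c _ _)
    _ ≤ 1 := by
        rw [← sum_div]
        exact div_le_one_of_le₀ (by exact_mod_cast hweights) (by positivity)

end Partition

lemma Refines.trans {V : Type*} {k₁ k₂ k₃ : ℕ} {P₁ : Fin k₁ → Finset V} {P₂ : Fin k₂ → Finset V}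
    {P₃ : Fin k₃ → Finset V} (h₁₂ : Refines P₁ P₂) (h₂₃ : Refines P₂ P₃) : Refines P₁ P₃ := by
  intro j
  obtain ⟨i, hi⟩ := h₁₂ j
  obtain ⟨l, hl⟩ := h₂₃ i
  exact ⟨l, hi.trans hl⟩

lemma Refines.refl {V : Type*} {k : ℕ} (P : Fin k → Finset V) : Refines P P :=
  fun j => ⟨j, subset_rfl⟩

def majorant (f : ℕ → ℕ) (n : ℕ) : ℕ := max n ((Iic n).sup f)

lemma majorant_mono (f : ℕ → ℕ) : Monotone (majorant f) := fun _ _ hab =>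
  max_le_max hab (sup_mono (Iic_subset_Iic.2 hab))

lemma id_le_majorant (f : ℕ → ℕ) : id ≤ majorant f := fun n => le_max_left n _

lemma apply_le_majorant (f : ℕ → ℕ) (n : ℕ) : f n ≤ majorant f n :=
  (le_sup (mem_Iic.2 le_rfl)).trans (le_max_right _ _)

lemma exists_robust_refinement_of_one_sub_lt_indPart {V C : Type*} [Fintype V] [DecidableEq V]
    [Fintype C] [DecidableEq C] (c : V → V → C) (f : ℕ → ℕ) (γ : ℝ) (m : ℕ) {k : ℕ}
    {Q : Fin k → Finset V} (hQ : IsPartition Q) (hQe : IsEquipartition' Q)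
    (hind : 1 - m * γ < indPart c Q) :
    ∃ (k' : ℕ) (Q' : Fin k' → Finset V), k' ≤ (majorant f)^[m] k ∧
      IsPartition Q' ∧ IsEquipartition' Q' ∧ Refines Q' Q ∧ IsRobust c f γ Q' := by
  induction m generalizing k Q with
  | zero =>
    have := indPart_le_one c hQ.1
    simp only [CharP.cast_eq_zero, zero_mul, sub_zero] at hind
    linarith
  | succ m ih =>
    by_cases hrob : IsRobust c f γ Q
    · exact ⟨k, Q, Function.id_le_iterate_of_id_le (id_le_majorant f) _ k, hQ, hQe,
        Refines.refl Q, hrob⟩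
    simp only [IsRobust, not_forall, not_le] at hrob
    obtain ⟨k₂, Q₂, hQ₂, hQ₂e, hQ₂Q, hk₂, hind₂⟩ := hrob
    obtain ⟨k', Q', hk', hQ', hQ'e, hQ'Q₂, hrob'⟩ :=
      ih hQ₂ hQ₂e (by push_cast at hind; linarith)
    refine ⟨k', Q', ?_, hQ', hQ'e, hQ'Q₂.trans hQ₂Q, hrob'⟩
    calc k' ≤ (majorant f)^[m] k₂ := hk'
      _ ≤ (majorant f)^[m] (majorant f k) :=
        (majorant_mono f).iterate m (hk₂.trans (apply_le_majorant f k))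
      _ = (majorant f)^[m + 1] k := (Function.iterate_succ_apply _ m k).symm

theorem robust_partition_exists_general (k : ℕ) (f : ℕ → ℕ) (γ : ℝ) (hγ : 0 < γ) :
    ∃ T : ℕ, ∀ (V C : Type) [Fintype V] [DecidableEq V] [Fintype C] [DecidableEq C]
      (c : V → V → C) (P : Fin k → Finset V),
      IsPartition P → IsEquipartition' P →
      ∃ (k' : ℕ) (P' : Fin k' → Finset V), k' ≤ T ∧
        IsPartition P' ∧ IsEquipartition' P' ∧ Refines P' P ∧ IsRobust c f γ P' := by
  obtain ⟨m, hm⟩ := exists_nat_gt γ⁻¹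
  refine ⟨(majorant f)^[m] k, fun V C _ _ _ _ c P hP hPe => ?_⟩
  have hmγ : 1 < m * γ := by rwa [inv_lt_iff_one_lt_mul₀ hγ] at hm
  exact exists_robust_refinement_of_one_sub_lt_indPart c f γ m hP hPe
    (by linarith [indPart_nonneg c P])

/-- robust partitioning of colored graphs: for any `k`, `f`, `γ > 0` there is a
bound `T = T(k,f,γ)` such that every equipartition of size `k` of a colored graph has an
`(f,γ)`-robust refining equipartition of size at most `T`. -/
theorem robust_partition_exists (k : ℕ) (hk : 0 < k) (f : ℕ → ℕ) (γ : ℝ) (hγ : 0 < γ) :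
    ∃ T : ℕ, ∀ (V C : Type) [Fintype V] [DecidableEq V] [Fintype C] [DecidableEq C]
      (c : V → V → C) (P : Fin k → Finset V),
      IsPartition P → IsEquipartition' P →
      ∃ (k' : ℕ) (P' : Fin k' → Finset V), k' ≤ T ∧
        IsPartition P' ∧ IsEquipartition' P' ∧ Refines P' P ∧ IsRobust c f γ P' :=
  robust_partition_exists_general k f γ hγ
end

section
/- For any ε > 0 there exists δ = δ(ε) > 0 such that any two δ-close partitions P and Q of the vertex set of a Σ-colored graph G satisfy |ind(P) − ind(Q)| ≤ ε. In fact one may take δ = Θ(ε²). -/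
/-!
Write `w(A, B) = |A||B| ∑_σ d_σ(A, B)² = ∑_σ e_σ(A, B)² / (|A||B|)`, where `e_σ` counts
the `σ`-colored pairs, so that `ind` is `∑_{i<j} w(V_i, V_j) / C(n, 2)`. Shrinking `A, B`
to subsets changes `w` by at most `3 (|A||B| - |A'||B'|)`. Deleting a set `T` from every
part of a partition loses at most `n² - (n - |T|)² ≤ 2|T|n` pairs in total, so it moves the
index by `O(|T| n / C(n, 2)) = O(δ)`. Two `δ`-close partitions coincide after deleting the
exceptional set `T`, hence `δ = ε / 48` suffices.
-/

open Finset

/-- Padding: view a `Fin k`-indexed partition as an `ℕ`-indexed one with empty parts beyond `k`. -/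
def padPart {V : Type*} {k : ℕ} (P : Fin k → Finset V) (i : ℕ) : Finset V :=
  if h : i < k then P ⟨i, h⟩ else ∅

/-- Two (padded) partitions are `δ`-close if they agree outside a set `T` of at most `δn`
vertices. -/
def DeltaClose {V : Type*} [Fintype V] [DecidableEq V] (δ : ℝ) {k l : ℕ}
    (P : Fin k → Finset V) (Q : Fin l → Finset V) : Prop :=
  ∃ T : Finset V, (T.card : ℝ) ≤ δ * (Fintype.card V) ∧
    ∀ i : ℕ, padPart P i \ T = padPart Q i \ T

section PairWeight

variable {V C : Type*} [DecidableEq C] (c : V → V → C)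

def colorCount (σ : C) (A B : Finset V) : ℕ := #{p ∈ A ×ˢ B | c p.1 p.2 = σ}

noncomputable def pairWeight [DecidableEq V] [Fintype C] (A B : Finset V) : ℝ :=
  #A * #B * indPair c A B

lemma colorCount_mono {σ : C} {A A' B B' : Finset V} (hA : A' ⊆ A) (hB : B' ⊆ B) :
    colorCount c σ A' B' ≤ colorCount c σ A B :=
  card_le_card (filter_subset_filter _ (product_subset_product hA hB))

lemma sum_colorCount [Fintype C] (A B : Finset V) :
    ∑ σ, (colorCount c σ A B : ℝ) = #A * #B := by
  rw [← Nat.cast_mul, ← card_product]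
  exact_mod_cast (card_eq_sum_card_fiberwise fun _ _ => mem_univ _).symm

lemma colorCount_le [Fintype C] (σ : C) (A B : Finset V) :
    (colorCount c σ A B : ℝ) ≤ #A * #B := by
  rw [← sum_colorCount c A B]
  exact single_le_sum (f := fun σ => (colorCount c σ A B : ℝ)) (fun _ _ => by positivity)
    (mem_univ σ)

lemma pairWeight_eq_sum [DecidableEq V] [Fintype C] (A B : Finset V) :
    pairWeight c A B = ∑ σ, (colorCount c σ A B : ℝ) ^ 2 / (#A * #B) := by
  rw [pairWeight, indPair, mul_sum]
  refine sum_congr rfl fun σ _ => ?_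
  rw [_root_.dens, div_pow, ← colorCount]
  rcases eq_or_ne ((#A : ℝ) * #B) 0 with h | h
  · simp [h]
  · field_simp

end PairWeight

lemma abs_sq_div_sub_sq_div_le {e e' m m' : ℝ} (he' : 0 ≤ e') (hee' : e' ≤ e) (hem : e ≤ m)
    (hem' : e' ≤ m') (hmm' : m' ≤ m) :
    |e ^ 2 / m - e' ^ 2 / m'| ≤ 2 * (e - e') + e' * (m - m') / m := by
  rcases he'.eq_or_lt with rfl | he'pos
  · rw [zero_pow two_ne_zero, zero_div, sub_zero, zero_mul, zero_div, add_zero,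
      abs_of_nonneg (div_nonneg (sq_nonneg e) (by linarith))]
    exact div_le_of_le_mul₀ (by linarith) (by linarith) (by nlinarith)
  have hm' : 0 < m' := by linarith
  have hm : 0 < m := by linarith
  have hsplit : e ^ 2 / m - e' ^ 2 / m' =
      (e - e') * (e + e') / m - e' / m' * (e' * (m - m') / m) := by
    field_simp; ring
  have hX : (e - e') * (e + e') / m ≤ 2 * (e - e') := by
    rw [div_le_iff₀ hm]; nlinarith
  have hY : e' / m' * (e' * (m - m') / m) ≤ e' * (m - m') / m :=
    mul_le_of_le_one_left (by positivity) ((div_le_one hm').2 hem')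
  have hX0 : 0 ≤ (e - e') * (e + e') / m := by apply div_nonneg <;> nlinarith
  have hY0 : 0 ≤ e' / m' * (e' * (m - m') / m) := by
    apply mul_nonneg <;> apply div_nonneg <;> nlinarith
  rw [hsplit, abs_sub_le_iff]
  constructor <;> linarith

section PairWeightBound

variable {V C : Type*} [DecidableEq V] [Fintype C] [DecidableEq C] (c : V → V → C)

lemma abs_pairWeight_sub_le {A A' B B' : Finset V} (hA : A' ⊆ A) (hB : B' ⊆ B) :
    |pairWeight c A B - pairWeight c A' B'| ≤ 3 * ((#A : ℝ) * #B - #A' * #B') := by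
  set m : ℝ := #A * #B
  set m' : ℝ := #A' * #B'
  have hmm' : m' ≤ m := mul_le_mul (by exact_mod_cast card_le_card hA)
    (by exact_mod_cast card_le_card hB) (by positivity) (by positivity)
  have hm' : 0 ≤ m' := by positivity
  rw [pairWeight_eq_sum, pairWeight_eq_sum, ← sum_sub_distrib]
  calc |∑ σ, ((colorCount c σ A B : ℝ) ^ 2 / m - (colorCount c σ A' B' : ℝ) ^ 2 / m')|
      ≤ ∑ σ, |(colorCount c σ A B : ℝ) ^ 2 / m - (colorCount c σ A' B' : ℝ) ^ 2 / m'| :=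
        abs_sum_le_sum_abs _ _
    _ ≤ ∑ σ, (2 * ((colorCount c σ A B : ℝ) - colorCount c σ A' B')
          + colorCount c σ A' B' * (m - m') / m) := by
        exact sum_le_sum fun σ _ => abs_sq_div_sub_sq_div_le (by positivity)
          (by exact_mod_cast colorCount_mono c hA hB) (colorCount_le c σ A B)
          (colorCount_le c σ A' B') hmm'
    _ = 2 * (m - m') + m' * (m - m') / m := by
        rw [sum_add_distrib, ← mul_sum, sum_sub_distrib, ← sum_div, ← sum_mul,
          sum_colorCount, sum_colorCount]
    _ ≤ 3 * (m - m') := by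
        have : m' * (m - m') / m ≤ m - m' :=
          div_le_of_le_mul₀ (by positivity) (by linarith) (by nlinarith)
        linarith

end PairWeightBound

section PairSum

open Function

variable {V C : Type*} [DecidableEq V] [Fintype C] [DecidableEq C] (c : V → V → C)

/-- Indexed by `ℕ` so that partitions with different numbers of parts can be compared
termwise after padding with empty parts. -/
noncomputable def pairSum (R : ℕ → Finset V) (m : ℕ) : ℝ :=
  ∑ i ∈ range m, ∑ j ∈ range m, if i < j then pairWeight c (R i) (R j) else 0

lemma abs_pairSum_sub_le {R R' : ℕ → Finset V} (h : ∀ i, R' i ⊆ R i) (m : ℕ) :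
    |pairSum c R m - pairSum c R' m| ≤
      3 * ∑ i ∈ range m, ∑ j ∈ range m, ((#(R i) : ℝ) * #(R j) - #(R' i) * #(R' j)) := by
  rw [pairSum, pairSum, ← sum_sub_distrib, mul_sum]
  refine (abs_sum_le_sum_abs _ _).trans (sum_le_sum fun i _ => ?_)
  rw [← sum_sub_distrib, mul_sum]
  refine (abs_sum_le_sum_abs _ _).trans (sum_le_sum fun j _ => ?_)
  split_ifs
  · exact abs_pairWeight_sub_le c (h i) (h j)
  · have : (#(R' i) : ℝ) * #(R' j) ≤ #(R i) * #(R j) := by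
      gcongr <;> exact h _
    rw [sub_zero, abs_zero]
    linarith

lemma sum_sum_card_mul_card_sub_sdiff_le [Fintype V] {R : ℕ → Finset V}
    (hR : Pairwise (Disjoint on R)) (T : Finset V) (m : ℕ) :
    ∑ i ∈ range m, ∑ j ∈ range m, ((#(R i) : ℝ) * #(R j) - #(R i \ T) * #(R j \ T)) ≤
      2 * #T * Fintype.card V := by
  set U := (range m).biUnion R
  have hU : ∑ i ∈ range m, (#(R i) : ℝ) = #U := by
    rw [card_biUnion (hR.set_pairwise _)]; push_cast; rfl
  have hUT : ∑ i ∈ range m, (#(R i \ T) : ℝ) = #(U \ T) := by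
    have : (range m).biUnion (fun i => R i \ T) = U \ T := by
      ext x; simp only [U, mem_biUnion, mem_sdiff]; tauto
    have hRT : Pairwise (Disjoint on fun i => R i \ T) := fun i j hij =>
      (hR hij).mono sdiff_le sdiff_le
    rw [← this, card_biUnion (hRT.set_pairwise _)]
    push_cast; rfl
  have hUV : (#U : ℝ) ≤ Fintype.card V := by exact_mod_cast card_le_univ U
  have hUTU : (#(U \ T) : ℝ) ≤ #U := by exact_mod_cast card_le_card sdiff_subset
  have hUTT : (#U : ℝ) ≤ #(U \ T) + #T := by exact_mod_cast card_le_card_sdiff_add_card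
  simp only [sum_sub_distrib, ← sum_mul_sum, hU, hUT]
  nlinarith

lemma abs_pairSum_sub_sdiff_le [Fintype V] {R : ℕ → Finset V} (hR : Pairwise (Disjoint on R))
    (T : Finset V) (m : ℕ) :
    |pairSum c R m - pairSum c (fun i => R i \ T) m| ≤ 6 * #T * Fintype.card V := by
  have := abs_pairSum_sub_le c (fun i => sdiff_subset (s := R i) (t := T)) m
  have := sum_sum_card_mul_card_sub_sdiff_le hR T m
  linarith

end PairSum

section Padding

open Function

variable {V : Type*} {k : ℕ}

lemma padPart_coe (P : Fin k → Finset V) (i : Fin k) : padPart P i = P i := by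
  simp [padPart]

lemma padPart_of_le (P : Fin k → Finset V) {i : ℕ} (hi : k ≤ i) : padPart P i = ∅ := by
  simp [padPart, not_lt.2 hi]

lemma pairwise_disjoint_padPart {P : Fin k → Finset V} (hP : Pairwise (Disjoint on P)) :
    Pairwise (Disjoint on padPart P) := by
  intro i j hij
  simp only [onFun, padPart]
  split_ifs
  · exact hP fun h => hij (by simpa using congrArg Fin.val h)
  all_goals simp

end Padding

lemma sum_fin_eq_sum_range_of_le {M : Type*} [AddCommMonoid M] {k m : ℕ} (hkm : k ≤ m)
    {f : ℕ → M} (hf : ∀ i, k ≤ i → f i = 0) :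
    ∑ i : Fin k, f i = ∑ i ∈ range m, f i := by
  rw [Fin.sum_univ_eq_sum_range]
  exact sum_subset (range_subset_range.2 hkm) fun i _ hi => hf i (by simpa using hi)

lemma indPart_eq_pairSum_padPart {V C : Type*} [Fintype V] [DecidableEq V] [Fintype C]
    [DecidableEq C] (c : V → V → C) {k m : ℕ} (P : Fin k → Finset V) (hkm : k ≤ m) :
    indPart c P = pairSum c (padPart P) m / (Fintype.card V).choose 2 := by
  rw [indPart, pairSum, sum_div, sum_filter, Fintype.sum_prod_type]
  rw [← sum_fin_eq_sum_range_of_le hkm]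
  · refine sum_congr rfl fun i _ => ?_
    rw [sum_div, ← sum_fin_eq_sum_range_of_le hkm]
    · refine sum_congr rfl fun j _ => ?_
      simp only [padPart_coe, Fin.lt_def, pairWeight, ite_div, zero_div, mul_div_right_comm]
    · intro j hj
      simp [padPart_of_le P hj, pairWeight]
  · intro i hi
    simp [padPart_of_le P hi, pairWeight]

lemma mul_card_div_choose_two_le {n : ℕ} {t δ : ℝ} (hδ : 0 ≤ δ) (ht : t ≤ δ * n) :
    t * n / n.choose 2 ≤ 4 * δ := by
  rcases lt_or_ge n 2 with hn | hn
  · rw [Nat.choose_eq_zero_of_lt hn, Nat.cast_zero, div_zero]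
    positivity
  have hn' : (2 : ℝ) ≤ n := by exact_mod_cast hn
  have hN : (n : ℝ) ^ 2 / 4 ≤ n.choose 2 := by
    rw [Nat.cast_choose_two]; nlinarith
  rw [div_le_iff₀ (by nlinarith)]
  nlinarith [mul_le_mul_of_nonneg_right ht (by linarith : (0 : ℝ) ≤ n)]

/-- for every `ε > 0` there is `δ > 0` such that any two `δ`-close partitions
of a colored complete graph have indexes within `ε` of each other. -/
theorem close_partitions_index (ε : ℝ) (hε : 0 < ε) :
    ∃ δ : ℝ, 0 < δ ∧
      ∀ (V C : Type) [Fintype V] [DecidableEq V] [Fintype C] [DecidableEq C]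
        (c : V → V → C) (k l : ℕ) (P : Fin k → Finset V) (Q : Fin l → Finset V),
        IsPartition P → IsPartition Q → DeltaClose δ P Q →
        |indPart c P - indPart c Q| ≤ ε := by
  refine ⟨ε / 48, by positivity, ?_⟩
  rintro V C _ _ _ _ c k l P Q hP hQ ⟨T, hT, hPQ⟩
  set m := max k l
  have hPT := abs_pairSum_sub_sdiff_le c (pairwise_disjoint_padPart hP.1) T m
  have hQT := abs_pairSum_sub_sdiff_le c (pairwise_disjoint_padPart hQ.1) T m
  rw [show (fun i => padPart P i \ T) = fun i => padPart Q i \ T from funext hPQ] at hPT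
  rw [indPart_eq_pairSum_padPart c P (le_max_left k l),
    indPart_eq_pairSum_padPart c Q (le_max_right k l), ← sub_div, abs_div, Nat.abs_cast]
  calc |pairSum c (padPart P) m - pairSum c (padPart Q) m| / (Fintype.card V).choose 2
      ≤ 12 * #T * Fintype.card V / (Fintype.card V).choose 2 := by
        gcongr
        linarith [abs_sub_le (pairSum c (padPart P) m)
          (pairSum c (fun i => padPart Q i \ T) m) (pairSum c (padPart Q) m),
          abs_sub_comm (pairSum c (fun i => padPart Q i \ T) m) (pairSum c (padPart Q) m)]
    _ = 12 * (#T * Fintype.card V / (Fintype.card V).choose 2) := by ring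
    _ ≤ 12 * (4 * (ε / 48)) := by
        gcongr
        exact mul_card_div_choose_two_le (by positivity) hT
    _ = ε := by ring
end
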